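/- For λ > 0 and r > 0, ∫_r^∞ r₂·E₁(2λ·(r + r₂)) dr₂ = (1/(8λ²))·exp(-4λr), where E₁ is the exponential integral. -/
import Mathlib


open Real MeasureTheory

noncomputable def E1 (z : ℝ) : ℝ := ∫ t in Set.Ioi z, Real.exp (-t) / t

open Set Filter

lemma g_intOn {z : ℝ} (hz : 0 < z) :
    IntegrableOn (fun t => Real.exp (-t) / t) (Ioi z) := by
  have hmaj : IntegrableOn (fun t => (1 / z) * Real.exp (-(1 : ℝ) * t)) (Ioi z) :=
    (exp_neg_integrableOn_Ioi z one_pos).const_mul _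
  refine hmaj.integrable.mono ?_ ?_
  · exact ((measurable_neg.exp.div measurable_id).aestronglyMeasurable)
  · filter_upwards [MeasureTheory.ae_restrict_mem measurableSet_Ioi] with t ht
    have htz : z < t := ht
    have ht0 : 0 < t := hz.trans htz
    rw [Real.norm_eq_abs, Real.norm_eq_abs, abs_of_nonneg (by positivity),
      abs_of_nonneg (by positivity), show (-1 : ℝ) * t = -t by ring, one_div,
      ← div_eq_inv_mul]
    gcongr

lemma E1_nonneg {z : ℝ} (hz : 0 < z) : 0 ≤ E1 z := by
  apply setIntegral_nonneg measurableSet_Ioi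
  intro t ht
  have : 0 < t := hz.trans ht
  positivity

lemma E1_le {z : ℝ} (hz : 0 < z) : E1 z ≤ Real.exp (-z) / z := by
  have h1 : E1 z ≤ ∫ t in Ioi z, Real.exp (-t) / z := by
    apply setIntegral_mono_on (g_intOn hz)
      (((exp_neg_integrableOn_Ioi z one_pos).congr_fun (by intro t _; norm_num)
        measurableSet_Ioi).div_const z)
      measurableSet_Ioi
    intro t ht
    have htz : z < t := ht
    have ht0 : 0 < t := hz.trans htz
    gcongr
  have h2 : (∫ t in Ioi z, Real.exp (-t) / z) = Real.exp (-z) / z := by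
    rw [integral_div, integral_exp_neg_Ioi]
  linarith

lemma E1_hasDerivAt {z : ℝ} (hz : 0 < z) :
    HasDerivAt E1 (-(Real.exp (-z) / z)) z := by
  set g : ℝ → ℝ := fun t => Real.exp (-t) / t with hg
  set c : ℝ := z / 2 with hc
  have hc0 : 0 < c := by positivity
  have hcz : c < z := by simp [hc]; linarith
  -- E1 w = E1 c - ∫ t in c..w, g t  for w > c
  have key : ∀ w ∈ Ioi c, E1 w = E1 c - ∫ t in c..w, g t := by
    intro w hw
    have hcw : c ≤ w := le_of_lt hw
    have hsplit : (∫ t in Ioi c, g t) = (∫ t in Ioc c w, g t) + ∫ t in Ioi w, g t := by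
      rw [← Ioc_union_Ioi_eq_Ioi hcw]
      rw [setIntegral_union (Set.Ioc_disjoint_Ioi le_rfl)
        measurableSet_Ioi ((g_intOn hc0).mono_set Ioc_subset_Ioi_self)
        ((g_intOn (hc0.trans_le hcw)))]
    have : E1 c = (∫ t in Ioc c w, g t) + E1 w := hsplit
    rw [intervalIntegral.integral_of_le hcw]
    simp only [E1] at this ⊢
    linarith [this]
  have hmeas : StronglyMeasurableAtFilter g (nhds z) :=
    ((measurable_neg.exp.div measurable_id).stronglyMeasurable).stronglyMeasurableAtFilter
  have hcont : ContinuousAt g z := by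
    apply ContinuousAt.div
    · exact (Real.continuous_exp.comp continuous_neg).continuousAt
    · exact continuousAt_id
    · exact ne_of_gt hz
  have hint : IntervalIntegrable g volume c z := by
    rw [intervalIntegrable_iff_integrableOn_Ioc_of_le hcz.le]
    exact (g_intOn hc0).mono_set Ioc_subset_Ioi_self
  have hD : HasDerivAt (fun w => E1 c - ∫ t in c..w, g t) (-(g z)) z := by
    have := intervalIntegral.integral_hasDerivAt_right hint hmeas hcont
    simpa using this.const_sub (E1 c)
  apply hD.congr_of_eventuallyEq
  filter_upwards [Ioi_mem_nhds hcz] with w hw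
  exact key w hw

theorem stmt6 (lam r : ℝ) (hlam : 0 < lam) (hr : 0 < r) :
    ∫ r2 in Set.Ioi r, r2 * E1 (2 * lam * (r + r2))
      = (1 / (8 * lam ^ 2)) * Real.exp (-4 * lam * r) := by
  set F : ℝ → ℝ := fun x => ((x ^ 2 - r ^ 2) / 2) * E1 (2 * lam * (r + x))
      - ((x - r) / (4 * lam) + 1 / (8 * lam ^ 2)) * Real.exp (-(2 * lam * (r + x))) with hF
  have harg : ∀ x : ℝ, 0 < x → 0 < 2 * lam * (r + x) := by intro x hx; positivity
  -- inner derivative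
  have hinner : ∀ x : ℝ, HasDerivAt (fun y => 2 * lam * (r + y)) (2 * lam) x := by
    intro x
    simpa using ((hasDerivAt_id x).const_add r).const_mul (2 * lam)
  have hE : ∀ x : ℝ, 0 < x → HasDerivAt (fun y => E1 (2 * lam * (r + y)))
      (-(Real.exp (-(2 * lam * (r + x))) / (2 * lam * (r + x))) * (2 * lam)) x := by
    intro x hx
    exact (E1_hasDerivAt (harg x hx)).comp x (hinner x)
  have hexp : ∀ x : ℝ, HasDerivAt (fun y => Real.exp (-(2 * lam * (r + y))))
      (Real.exp (-(2 * lam * (r + x))) * (-(2 * lam))) x := by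
    intro x
    exact ((hinner x).neg).exp
  have hderiv : ∀ x ∈ Ioi r, HasDerivAt F (x * E1 (2 * lam * (r + x))) x := by
    intro x hx
    have hx0 : 0 < x := hr.trans hx
    have hP : HasDerivAt (fun y : ℝ => (y ^ 2 - r ^ 2) / 2) x x := by
      have := ((hasDerivAt_pow 2 x).sub_const (r ^ 2)).div_const 2
      simpa using this
    have hQ : HasDerivAt (fun y : ℝ => (y - r) / (4 * lam) + 1 / (8 * lam ^ 2))
        (1 / (4 * lam)) x := by
      have := (((hasDerivAt_id x).sub_const r).div_const (4 * lam)).add_const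
        (1 / (8 * lam ^ 2))
      simpa using this
    have hD : HasDerivAt F
        ((x * E1 (2 * lam * (r + x)) + ((x ^ 2 - r ^ 2) / 2) *
          (-(Real.exp (-(2 * lam * (r + x))) / (2 * lam * (r + x))) * (2 * lam)))
        - ((1 / (4 * lam)) * Real.exp (-(2 * lam * (r + x)))
          + ((x - r) / (4 * lam) + 1 / (8 * lam ^ 2)) *
            (Real.exp (-(2 * lam * (r + x))) * (-(2 * lam))))) x := by
      exact (hP.mul (hE x hx0)).sub (hQ.mul (hexp x))
    convert hD using 1
    have hrx : r + x ≠ 0 := by positivity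
    have hl : lam ≠ 0 := ne_of_gt hlam
    field_simp
    ring
  -- continuity at r
  have hcont : ContinuousWithinAt F (Ici r) r := by
    have h1 : ContinuousAt (fun y => E1 (2 * lam * (r + y))) r :=
      ContinuousAt.comp (g := E1) (f := fun y => 2 * lam * (r + y))
        (E1_hasDerivAt (harg r hr)).continuousAt (hinner r).continuousAt
    have h2 : ContinuousAt F r := by
      apply ContinuousAt.sub
      · exact (continuousAt_id.pow 2 |>.sub continuousAt_const |>.div_const 2).mul h1
      · exact ((continuousAt_id.sub continuousAt_const |>.div_const (4 * lam)).add
          continuousAt_const).mul ((hinner r).continuousAt.neg.rexp)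
    exact h2.continuousWithinAt
  -- nonnegativity of the integrand
  have hnonneg : ∀ x ∈ Ioi r, 0 ≤ x * E1 (2 * lam * (r + x)) := by
    intro x hx
    have hx0 : 0 < x := hr.trans hx
    exact mul_nonneg hx0.le (E1_nonneg (harg x hx0))
  -- limits
  have hx0lim : Tendsto (fun x : ℝ => Real.exp (-(2 * lam * x))) atTop (nhds 0) := by
    apply Real.tendsto_exp_atBot.comp
    apply tendsto_neg_atBot_iff.mpr
    exact Tendsto.const_mul_atTop (by positivity) tendsto_id
  have hx1lim : Tendsto (fun x : ℝ => x * Real.exp (-(2 * lam * x))) atTop (nhds 0) := by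
    have h := (tendsto_pow_mul_exp_neg_atTop_nhds_zero 1).comp
      (Tendsto.const_mul_atTop (show (0:ℝ) < 2 * lam by positivity) tendsto_id)
    have h2 := h.const_mul (1 / (2 * lam))
    simp only [mul_zero] at h2
    apply h2.congr
    intro x
    simp only [Function.comp_apply, pow_one, id]
    field_simp
  have hT2lim : Tendsto (fun x : ℝ => ((x - r) / (4 * lam) + 1 / (8 * lam ^ 2)) *
      Real.exp (-(2 * lam * (r + x)))) atTop (nhds 0) := by
    have h := (hx1lim.const_mul (Real.exp (-(2 * lam * r)) / (4 * lam))).add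
      ((hx0lim.const_mul (Real.exp (-(2 * lam * r)) * (-r / (4 * lam) + 1 / (8 * lam ^ 2)))))
    simp only [mul_zero, add_zero] at h
    apply h.congr
    intro x
    have : Real.exp (-(2 * lam * (r + x))) =
        Real.exp (-(2 * lam * r)) * Real.exp (-(2 * lam * x)) := by
      rw [← Real.exp_add]; ring_nf
    rw [this]
    ring
  have hT1lim : Tendsto (fun x : ℝ => ((x ^ 2 - r ^ 2) / 2) * E1 (2 * lam * (r + x)))
      atTop (nhds 0) := by
    have hb := hx1lim.const_mul (1 / (4 * lam))
    simp only [mul_zero] at hb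
    apply squeeze_zero' ?_ ?_ hb
    · filter_upwards [Ioi_mem_atTop r] with x hx
      have hxr : r < x := hx
      have hx0 : 0 < x := hr.trans hxr
      exact mul_nonneg (by nlinarith) (E1_nonneg (harg x hx0))
    · filter_upwards [Ioi_mem_atTop r] with x hx
      have hx0 : 0 < x := hr.trans hx
      have hs : 0 < 2 * lam * (r + x) := harg x hx0
      have hE1 : E1 (2 * lam * (r + x)) ≤
          Real.exp (-(2 * lam * (r + x))) / (2 * lam * (r + x)) := E1_le hs
      have hcmp : Real.exp (-(2 * lam * (r + x))) / (2 * lam * (r + x)) ≤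
          Real.exp (-(2 * lam * x)) / (2 * lam * x) := by
        apply div_le_div₀ (Real.exp_pos _).le
        · exact Real.exp_le_exp.2 (by nlinarith)
        · positivity
        · nlinarith
      calc ((x ^ 2 - r ^ 2) / 2) * E1 (2 * lam * (r + x))
          ≤ (x ^ 2 / 2) * (Real.exp (-(2 * lam * x)) / (2 * lam * x)) := by
            apply mul_le_mul (by nlinarith) (hE1.trans hcmp)
              (E1_nonneg hs) (by positivity)
        _ = 1 / (4 * lam) * (x * Real.exp (-(2 * lam * x))) := by
            field_simp
            ring
  have hFlim : Tendsto F atTop (nhds 0) := by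
    have := hT1lim.sub hT2lim
    simpa only [sub_zero] using this
  have hmain := integral_Ioi_of_hasDerivAt_of_nonneg hcont hderiv hnonneg hFlim
  rw [hmain]
  simp only [hF]
  have h1 : (r : ℝ) ^ 2 - r ^ 2 = 0 := by ring
  have h2 : -(2 * lam * (r + r)) = -4 * lam * r := by ring
  rw [h1, h2]
  ring
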